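/- Let μ ⊆ λ and ν ⊢ |λ/μ|. The map τ, which sends an LR tableau A ∈ LR(λ/μ, ν) with recording matrix C = (c_{i,j}) to the tableau with recording matrix E = (e_{i,j}) defined by e_{i,j} = c_{j,i} for 1 ≤ i ≤ j ≤ l = ℓ(λ), is a well-defined bijection τ : LR(λ/μ, ν) → CF(ν, μ, λ). -/
import Mathlib


/-!
Common setup: a (skew) semistandard Young tableau with entries `≤ m` is encoded by
its Gelfand–Tsetlin pattern `g : ℕ → ℕ → ℕ`, where `g i j = μ_i +` (number of entries
`≤ j` in row `i`); rows `i = 0, 1, 2, …` are counted from the top, entry values are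
`1, …, m`, and columns are `j = 0, …, m` (column `0` is the inner shape `μ`,
column `m` is the outer shape `λ`).  All maps in the paper are realized concretely
via Bender–Knuth transformations, following Propositions 1–3 of the paper.
-/

namespace YoungTableauBijections

/-- Gelfand–Tsetlin-type encoding of a skew semistandard Young tableau. -/
abbrev GT : Type := ℕ → ℕ → ℕ

/-- `p` is a partition: weakly decreasing, finitely many nonzero parts (0-indexed). -/
def IsPartition (p : ℕ → ℕ) : Prop :=
  (∀ i, p (i + 1) ≤ p i) ∧ ∃ N, ∀ i, N ≤ i → p i = 0

/-- The number of (nonzero) rows `ℓ(p)` of a partition. -/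
noncomputable def numRows (p : ℕ → ℕ) : ℕ := sInf {N | ∀ i, N ≤ i → p i = 0}

/-- The size `|p|` of a partition (or of a weight). -/
noncomputable def psize (p : ℕ → ℕ) : ℕ := ∑' i, p i

/-- `mu ⊆ lam` componentwise. -/
def subShape (mu lam : ℕ → ℕ) : Prop := ∀ i, mu i ≤ lam i

/-- `g` encodes a semistandard skew tableau with entries `≤ m` (weakly increasing
rows, strictly increasing columns, finitely many cells); columns beyond `m` are
required to be constant (no junk). -/
def IsSSYT (m : ℕ) (g : GT) : Prop :=
  (∀ i j, j < m → g i j ≤ g i (j + 1)) ∧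
  (∀ i j, j < m → g (i + 1) (j + 1) ≤ g i j) ∧
  (∀ i, g (i + 1) 0 ≤ g i 0) ∧
  (∃ N, ∀ i, N ≤ i → g i m = 0) ∧
  (∀ i j, m ≤ j → g i j = g i m)

/-- The number of entries equal to `j + 1` in row `i`
(the recording matrix, 0-indexed). -/
def rowCount (g : GT) (i j : ℕ) : ℕ := g i (j + 1) - g i j

/-- The weight: `wt g j` is the total number of entries equal to `j + 1`. -/
noncomputable def wt (g : GT) (j : ℕ) : ℕ := ∑' i, rowCount g i j

/-- `g ∈ YT(λ/μ, a)`: semistandard, of shape `λ/μ`, entries `≤ m`, and weight `a`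
(where `a j` is the required number of entries equal to `j + 1`). -/
def MemYT (m : ℕ) (lam mu a : ℕ → ℕ) (g : GT) : Prop :=
  IsSSYT m g ∧ (∀ i, g i 0 = mu i) ∧ (∀ i, g i m = lam i) ∧
  ∀ j, j < m → wt g j = a j

/-- The reversed weight `a* = (a_m, …, a_1)` (0-indexed). -/
def wrev (m : ℕ) (a : ℕ → ℕ) : ℕ → ℕ := fun j => a (m - 1 - j)

/-- The lattice-word (Littlewood–Richardson) condition: every initial segment of the
right-to-left, top-to-bottom reading word has at least as many entries `r` as
entries `r + 1`. -/
def IsLattice (m : ℕ) (g : GT) : Prop :=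
  ∀ j i : ℕ, j + 1 < m →
    (∑ q ∈ Finset.range (i + 1), rowCount g q (j + 1)) ≤
      ∑ q ∈ Finset.range i, rowCount g q j

/-- `g ∈ LR(λ/μ, ν)`. -/
def MemLR (m : ℕ) (lam mu nu : ℕ → ℕ) (g : GT) : Prop :=
  MemYT m lam mu nu g ∧ IsLattice m g

/-- The canonical tableau `Can(λ)`: row `i` is filled with entries `i + 1`. -/
def canGT (lam : ℕ → ℕ) : GT := fun i j => if i < j then lam i else 0

/-- The Bender–Knuth transformation `s_r` (`1 ≤ r ≤ m - 1`), acting on GT patterns: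
it replaces `a_{i,r}` by
`min (a_{i,r+1}) (a_{i-1,r-1}) + max (a_{i,r-1}) (a_{i+1,r+1}) - a_{i,r}`
(with the top-row convention that the `min` term is `a_{i,r+1}` for the first row). -/
def bk (r : ℕ) (g : GT) : GT := fun i j =>
  if j = r then
    (if i = 0 then g i (r + 1) else min (g i (r + 1)) (g (i - 1) (r - 1))) +
      max (g i (r - 1)) (g (i + 1) (r + 1)) - g i r
  else g i j

/-- Apply a word in the Bender–Knuth generators; the rightmost letter acts first. -/
def applyWord : List ℕ → GT → GT
  | [], g => g
  | r :: w, g => bk r (applyWord w g)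

/-- The block `(s_b s_{b-1} ⋯ s_1)`. -/
def descBlock (b : ℕ) : List ℕ := (List.range b).map fun i => b - i

/-- `z_m = (s_1)(s_2 s_1)(s_3 s_2 s_1) ⋯ (s_{m-1} ⋯ s_2 s_1)` as a word. -/
def zWord (m : ℕ) : List ℕ := ((List.range (m - 1)).map fun q => descBlock (q + 1)).flatten

/-- The block `(s_j s_{j+1} ⋯ s_{j+r-1})`. -/
def ascBlock (j r : ℕ) : List ℕ := (List.range r).map fun i => j + i

/-- `t_{r,l} = (s_l s_{l+1} ⋯ s_{l+r-1}) ⋯ (s_2 s_3 ⋯ s_{r+1})(s_1 s_2 ⋯ s_r)`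
as a word (here `m = r + l`). -/
def tWord (r l : ℕ) : List ℕ := ((List.range l).map fun q => ascBlock (l - q) r).flatten

/-- The map `z_m`. -/
def zmapGT (m : ℕ) : GT → GT := applyWord (zWord m)

/-- The map `t_{r,l}`. -/
def tmapGT (r l : ℕ) : GT → GT := applyWord (tWord r l)

/-- Cut all columns beyond column `m` (normalize to entries `≤ m`). -/
def restrictGT (m : ℕ) (g : GT) : GT := fun i j => g i (min j m)

/-- The Schützenberger involution `ξ` on (skew) tableaux with entries `≤ m`,
computed by the Bender–Knuth word `z_m` (Proposition 1 of the paper). -/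
def schutz (m : ℕ) (g : GT) : GT := restrictGT m (zmapGT m g)

/-- `glue r B A` encodes `B ⋆ Ã`: the union of `B` (entries `≤ r`) with `A`
relabelled to have entries `r + 1, r + 2, …`. -/
def glue (r : ℕ) (B A : GT) : GT := fun i j => if j ≤ r then B i j else A i (j - r)

/-- Shift columns left by `s` (relabel entries by subtracting `s`). -/
def shiftCols (s : ℕ) (g : GT) : GT := fun i j => g i (j + s)

/-- Tableau switching `ζ(B, A) = (A′, B′)`, where `B` has entries `≤ r` and `A` has
entries `≤ l`: glue, apply `t_{r,l}`, and split again (Proposition 2 of the paper). -/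
def switch (r l : ℕ) (B A : GT) : GT × GT :=
  (restrictGT l (tmapGT r l (glue r B A)),
    restrictGT r (shiftCols l (tmapGT r l (glue r B A))))

/-- Jeu de taquin rectification `ψ` of a skew tableau with entries `≤ l`:
switch it past the canonical tableau of its inner shape. -/
noncomputable def rect (l : ℕ) (A : GT) : GT :=
  (switch (numRows fun i => A i 0) l (canGT fun i => A i 0) A).1

/-- `V ∈ Mat(a, b)`: a `k × k` nonnegative integer matrix (0-indexed) with row
sums `a` and column sums `b`. -/
def MemMat (k : ℕ) (a b : ℕ → ℕ) (V : ℕ → ℕ → ℕ) : Prop :=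
  (∀ i, i < k → ∑ j ∈ Finset.range k, V i j = a i) ∧
  (∀ j, j < k → ∑ i ∈ Finset.range k, V i j = b j)

/-- The skew tableau `Y ∈ YT(π/σ, b)` of Proposition 3: row `(k+1) - i` (1-indexed)
contains exactly `v_{i,j}` entries equal to `j`. -/
def rskY (k : ℕ) (V : ℕ → ℕ → ℕ) : GT := fun p j =>
  if p < k then
    (∑ q ∈ Finset.range (k - p - 1), ∑ s ∈ Finset.range k, V q s) +
      ∑ q ∈ Finset.range (min j k), V (k - p - 1) q
  else 0

/-- The companion skew tableau `X` of Proposition 3 (built from the transpose). -/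
def rskX (k : ℕ) (V : ℕ → ℕ → ℕ) : GT := rskY k fun i j => V j i

/-- The RSK correspondence `φ(V) = (B, A)` (insertion tableau, recording tableau),
realized via jeu de taquin as in Proposition 3 of the paper. -/
noncomputable def rsk (k : ℕ) (V : ℕ → ℕ → ℕ) : GT × GT :=
  (rect k (rskY k V), rect k (rskX k V))

/-- The rotated complemented tableau `A^•` of a straight-shape tableau `A` with
entries `≤ k` and at most `l` rows: `A^• i j = λ_1 - A (l-1-i) (k-j)`. -/
def rotGT (k l : ℕ) (A : GT) : GT := fun i j =>
  if i < l then A 0 k - A (l - 1 - i) (k - min j k) else 0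

/-- `composeGT q s Ytop Xbot` encodes the composition: `Ytop` occupies the top `q`
rows, shifted `s` columns to the right, sitting above and to the right of `Xbot`. -/
def composeGT (q s : ℕ) (Ytop Xbot : GT) : GT := fun i j =>
  if i < q then s + Ytop i j else Xbot (i - q) j

/-- `B ∈ CF(μ, ν, λ)`: `B ∈ YT(μ, λ - ν)` and `B ∘ Can(ν) ∈ LR(μ ∘ ν, λ)`
(all entries `≤ l`, where `l = ℓ(λ)`). -/
def MemCF (l : ℕ) (mu nu lam : ℕ → ℕ) (B : GT) : Prop :=
  MemYT l mu (fun _ => 0) (fun j => lam j - nu j) B ∧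
  MemLR l (fun i => if i < l then mu 0 + nu i else mu (i - l))
    (fun i => if i < l then mu 0 else 0) lam
    (composeGT l (mu 0) (canGT nu) B)

/-- `B ∈ CF*(μ, ν, λ)`: `B ∈ YT(μ, (λ - ν)*)` and `B^• ∘ Can(ν) ∈ LR(μ^• ∘ ν, λ)`. -/
def MemCFstar (l : ℕ) (mu nu lam : ℕ → ℕ) (B : GT) : Prop :=
  MemYT l mu (fun _ => 0) (wrev l fun j => lam j - nu j) B ∧
  MemLR l
    (fun i => if i < l then mu 0 + nu i
      else if i - l < numRows mu then mu 0 else 0)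
    (fun i => if i < l then mu 0
      else if i - l < numRows mu then mu 0 - mu (numRows mu - 1 - (i - l)) else 0)
    lam
    (composeGT l (mu 0) (canGT nu) (rotGT l (numRows mu) B))

/-- The extended recording matrix of `A` (1-indexed), with the conventions
`c_{0,q} = 0`, `c_{i,0} = μ_i`. -/
def cext (A : GT) (i q : ℕ) : ℕ :=
  if i = 0 then 0 else if q = 0 then A (i - 1) 0 else rowCount A (i - 1) (q - 1)

/-- The recording matrix `D = (d_{i,j})` of `γ(A)` (1-indexed):
`d_{i,j} = Σ_{q=0}^{l-j} c_{l-j+i,q} - Σ_{q=0}^{l-j+1} c_{l-j+1+i,q}`. -/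
def dmat (l : ℕ) (A : GT) (i j : ℕ) : ℕ :=
  (∑ q ∈ Finset.range (l - j + 1), cext A (l - j + i) q) -
    ∑ q ∈ Finset.range (l - j + 2), cext A (l - j + 1 + i) q

/-- The map `γ`, on GT patterns (its output is the straight-shape tableau of shape
`μ` whose recording matrix is `D`). -/
def gammaMap (l : ℕ) (A : GT) : GT := fun i j =>
  ∑ q ∈ Finset.Icc 1 (min j l), dmat l A (i + 1) q

/-- The companion map `τ`: `τ(A)` is the straight-shape tableau whose recording
matrix is `e_{i,j} = c_{j,i}`. -/
def tauMap (l : ℕ) (A : GT) : GT := fun i j =>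
  ∑ q ∈ Finset.range (min j l), rowCount A q i

/-- The reversal map `χ = ζ ∘ ξ ∘ ζ`:
`χ(A) = A″` where `(A′, C′) = ζ(Can(μ), A)` and `(C″, A″) = ζ(ξ^N(A′), C′)`. -/
def chiMap (r l : ℕ) (mu : ℕ → ℕ) (A : GT) : GT :=
  (switch l r (schutz l (switch r l (canGT mu) A).1) ((switch r l (canGT mu) A).2)).2

/-- The octahedral map `ς(A, B) = (B′, D)` defined by three tableau switchings. -/
noncomputable def octa (k1 k2 k3 : ℕ) (lam : ℕ → ℕ) (A B : GT) : GT × GT :=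
  let C1 := (switch k1 k2 (canGT lam) A).2
  let P := switch k1 k3 C1 B
  let pi := fun i => P.1 i k3
  (P.1, (switch (numRows pi) k1 (canGT pi) P.2).2)

/-! ### Auxiliary material for the proof of Proposition 11 -/

/-- The inverse of `tauMap`. -/
def invTau (l : ℕ) (mu : ℕ → ℕ) (B : GT) : GT := fun i j =>
  mu i + ∑ q ∈ Finset.range (min j l), rowCount B q i

lemma sum_rowCount_eq (g : GT) (i : ℕ) (hmono : ∀ q, g i q ≤ g i (q + 1)) (k : ℕ) :
    g i 0 + ∑ q ∈ Finset.range k, rowCount g i q = g i k := by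
  induction k with
  | zero => simp
  | succ k ih =>
    rw [Finset.sum_range_succ, ← add_assoc, ih, rowCount, Nat.add_sub_cancel' (hmono k)]

lemma ssyt_mono {m : ℕ} {g : GT} (h : IsSSYT m g) (i q : ℕ) : g i q ≤ g i (q + 1) := by
  rcases lt_or_ge q m with hq | hq
  · exact h.1 i q hq
  · rw [h.2.2.2.2 i q hq, h.2.2.2.2 i (q + 1) (le_trans hq (Nat.le_succ q))]

lemma ssyt_monotone {m : ℕ} {g : GT} (h : IsSSYT m g) (i : ℕ) : Monotone (g i) :=
  monotone_nat_of_le_succ (ssyt_mono h i)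

lemma rowCount_zero_of_const {m : ℕ} {g : GT} (h : IsSSYT m g) {q : ℕ} (hq : m ≤ q) (i : ℕ) :
    rowCount g i q = 0 := by
  rw [rowCount, h.2.2.2.2 i q hq, h.2.2.2.2 i (q + 1) (le_trans hq (Nat.le_succ q)),
    Nat.sub_self]

lemma ssyt_eval {m : ℕ} {g : GT} (h : IsSSYT m g) (i k : ℕ) :
    g i k = g i 0 + ∑ q ∈ Finset.range (min k m), rowCount g i q := by
  rw [sum_rowCount_eq g i (ssyt_mono h i)]
  rcases le_total k m with hk | hk
  · rw [min_eq_left hk]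
  · rw [min_eq_right hk, h.2.2.2.2 i k hk]

lemma psize_eq_sum {p : ℕ → ℕ} {N : ℕ} (h : ∀ i, N ≤ i → p i = 0) :
    psize p = ∑ i ∈ Finset.range N, p i :=
  tsum_eq_sum fun b hb => h b (Nat.le_of_not_lt fun hc => hb (Finset.mem_range.2 hc))

lemma wt_eq_sum {g : GT} {N j : ℕ} (h : ∀ i, N ≤ i → rowCount g i j = 0) :
    wt g j = ∑ i ∈ Finset.range N, rowCount g i j :=
  tsum_eq_sum fun b hb => h b (Nat.le_of_not_lt fun hc => hb (Finset.mem_range.2 hc))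

lemma ssyt_diag {m : ℕ} {g : GT} (h : IsSSYT m g) : ∀ k, k ≤ m → g k k ≤ g 0 0 := by
  intro k
  induction k with
  | zero => intro _; exact le_refl _
  | succ k ih => intro hk; exact le_trans (h.2.1 k k (by omega)) (ih (by omega))

lemma memYT_zero_row {m : ℕ} {lam mu a : ℕ → ℕ} {g : GT} (h : MemYT m lam mu a g)
    {i : ℕ} (hz : lam i = 0) (j : ℕ) : g i j = 0 := by
  have hm : g i m = 0 := by rw [h.2.2.1 i, hz]
  rcases le_total j m with hj | hj
  · exact Nat.le_zero.1 (hm ▸ ssyt_monotone h.1 i hj)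
  · rw [h.1.2.2.2.2 i j hj, hm]

lemma partial_sum_diff (l : ℕ) (f : ℕ → ℕ) (i : ℕ) :
    (∑ q ∈ Finset.range (min (i + 1) l), f q) - ∑ q ∈ Finset.range (min i l), f q
      = if i < l then f i else 0 := by
  split
  · next hi =>
      rw [min_eq_left (by omega), min_eq_left (by omega), Finset.sum_range_succ,
        Nat.add_sub_cancel_left]
  · next hi =>
      rw [min_eq_right (by omega), min_eq_right (by omega), Nat.sub_self]

lemma rowCount_tauMap (l : ℕ) (A : GT) (q i : ℕ) :
    rowCount (tauMap l A) q i = if i < l then rowCount A i q else 0 := by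
  simp only [rowCount, tauMap]
  exact partial_sum_diff l (fun p => rowCount A p q) i

lemma rowCount_invTau (l : ℕ) (mu : ℕ → ℕ) (B : GT) (q i : ℕ) :
    rowCount (invTau l mu B) q i = if i < l then rowCount B i q else 0 := by
  simp only [rowCount, invTau, Nat.add_sub_add_left]
  exact partial_sum_diff l (fun p => rowCount B p q) i

lemma rowCount_compose_top (l s : ℕ) (mu : ℕ → ℕ) (B : GT) {i : ℕ} (hi : i < l) (v : ℕ) :
    rowCount (composeGT l s (canGT mu) B) i v = if i = v then mu i else 0 := by
  simp only [rowCount, composeGT, canGT, hi, if_true]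
  rw [Nat.add_sub_add_left]
  split_ifs <;> omega

lemma rowCount_compose_bot (l s : ℕ) (mu : ℕ → ℕ) (B : GT) {i : ℕ} (hi : l ≤ i) (v : ℕ) :
    rowCount (composeGT l s (canGT mu) B) i v = rowCount B (i - l) v := by
  simp only [rowCount, composeGT, if_neg (by omega : ¬ i < l)]

lemma compose_colsum_top (l s : ℕ) (mu : ℕ → ℕ) (B : GT) {v k : ℕ} (hk : k ≤ l) :
    ∑ q ∈ Finset.range k, rowCount (composeGT l s (canGT mu) B) q v
      = if v < k then mu v else 0 := by
  rw [Finset.sum_congr rfl fun q hq =>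
    rowCount_compose_top l s mu B (lt_of_lt_of_le (Finset.mem_range.1 hq) hk) v]
  rw [Finset.sum_ite_eq' (Finset.range k) v mu]
  simp [Finset.mem_range]

lemma compose_colsum_bot (l s : ℕ) (mu : ℕ → ℕ) (B : GT) {v : ℕ} (hv : v < l) (p : ℕ) :
    ∑ q ∈ Finset.range (l + p), rowCount (composeGT l s (canGT mu) B) q v
      = mu v + ∑ q ∈ Finset.range p, rowCount B q v := by
  rw [Finset.sum_range_add]
  congr 1
  · rw [compose_colsum_top l s mu B (le_refl l), if_pos hv]
  · exact Finset.sum_congr rfl fun q _ => by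
      rw [rowCount_compose_bot l s mu B (Nat.le_add_right l q) v, Nat.add_sub_cancel_left]

lemma nu_tail_of_B {l : ℕ} {nu a : ℕ → ℕ} {B : GT} (hnu : IsPartition nu)
    (hBY : MemYT l nu (fun _ => 0) a B) : ∀ i, l ≤ i → nu i = 0 := by
  have h0 : B 0 0 = 0 := hBY.2.1 0
  have hll : B l l ≤ B 0 0 := ssyt_diag hBY.1 l le_rfl
  have hBll : B l l = nu l := hBY.2.2.1 l
  have hnl : nu l = 0 := by omega
  intro i hi
  have anti : nu i ≤ nu l := antitone_nat_of_succ_le hnu.1 hi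
  omega

lemma nu_tail_of_A {l : ℕ} {lam mu nu : ℕ → ℕ}
    (hnu : IsPartition nu) (hsub : subShape mu lam)
    (hsize : psize mu + psize nu = psize lam)
    (hl : ∀ i, lam i = 0 ↔ l ≤ i)
    {A : GT} (hA : MemLR l lam mu nu A) : ∀ i, l ≤ i → nu i = 0 := by
  obtain ⟨⟨hAS, hA0, hAl, hAw⟩, -⟩ := hA
  have hmuz : ∀ i, l ≤ i → mu i = 0 := fun i hi =>
    Nat.le_zero.1 ((hl i).2 hi ▸ hsub i)
  have hArow0 : ∀ i, l ≤ i → ∀ j, A i j = 0 := fun i hi j =>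
    memYT_zero_row ⟨hAS, hA0, hAl, hAw⟩ ((hl i).2 hi) j
  have hcrow0 : ∀ i, l ≤ i → ∀ q, rowCount A i q = 0 := fun i hi q => by
    simp [rowCount, hArow0 i hi]
  have hpl : psize lam = ∑ i ∈ Finset.range l, lam i := psize_eq_sum fun i hi => (hl i).2 hi
  have hpm : psize mu = ∑ i ∈ Finset.range l, mu i := psize_eq_sum hmuz
  have hkey : ∑ j ∈ Finset.range l, nu j + ∑ i ∈ Finset.range l, mu i
      = ∑ i ∈ Finset.range l, lam i := by
    have e1 : ∀ j ∈ Finset.range l, nu j = ∑ i ∈ Finset.range l, rowCount A i j :=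
      fun j hj => by
        rw [← hAw j (Finset.mem_range.1 hj), wt_eq_sum (N := l) fun i hi => hcrow0 i hi j]
    rw [Finset.sum_congr rfl e1, Finset.sum_comm, ← Finset.sum_add_distrib]
    refine Finset.sum_congr rfl fun i _ => ?_
    have h2 := sum_rowCount_eq A i (ssyt_mono hAS i) l
    rw [hA0 i, hAl i] at h2
    omega
  intro i hi
  obtain ⟨N0, hN0⟩ := hnu.2
  set M := max (i + 1) (max N0 l) with hM
  have hpn : psize nu = ∑ j ∈ Finset.range M, nu j := psize_eq_sum fun j hj => hN0 j (by omega)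
  have hsplit : ∑ j ∈ Finset.range l, nu j + ∑ j ∈ Finset.range (M - l), nu (l + j)
      = ∑ j ∈ Finset.range M, nu j := by
    rw [← Finset.sum_range_add, show l + (M - l) = M by omega]
  have hmem : nu i ≤ ∑ j ∈ Finset.range (M - l), nu (l + j) := by
    have hmem' : i - l ∈ Finset.range (M - l) := Finset.mem_range.2 (by omega)
    calc nu i = nu (l + (i - l)) := by congr 1; omega
      _ ≤ _ := Finset.single_le_sum (f := fun j => nu (l + j)) (fun _ _ => Nat.zero_le _) hmem'
  omega

lemma mapsTo_tau {l : ℕ} {lam mu nu : ℕ → ℕ}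
    (hlam : IsPartition lam) (hmu : IsPartition mu)
    (hsub : subShape mu lam) (hl : ∀ i, lam i = 0 ↔ l ≤ i)
    (hnul : ∀ i, l ≤ i → nu i = 0)
    {A : GT} (hA : MemLR l lam mu nu A) : MemCF l nu mu lam (tauMap l A) := by
  obtain ⟨hAY, hAL⟩ := hA
  obtain ⟨hAS, hA0, hAl, hAw⟩ := hAY
  have hmuz : ∀ i, l ≤ i → mu i = 0 := fun i hi =>
    Nat.le_zero.1 ((hl i).2 hi ▸ hsub i)
  have hArow0 : ∀ i, l ≤ i → ∀ j, A i j = 0 := fun i hi j =>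
    memYT_zero_row ⟨hAS, hA0, hAl, hAw⟩ ((hl i).2 hi) j
  have hcrow0 : ∀ i, l ≤ i → ∀ q, rowCount A i q = 0 := fun i hi q => by
    simp [rowCount, hArow0 i hi]
  have hccol0 : ∀ q i, l ≤ q → rowCount A i q = 0 := fun q i hq =>
    rowCount_zero_of_const hAS hq i
  set B := tauMap l A with hBdef
  have hBval : ∀ i j, B i j = ∑ q ∈ Finset.range (min j l), rowCount A q i :=
    fun i j => rfl
  have hBrc : ∀ q i, rowCount B q i = if i < l then rowCount A i q else 0 :=
    rowCount_tauMap l A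
  have hBrow0 : ∀ i, l ≤ i → ∀ j, B i j = 0 := fun i hi j => by
    rw [hBval]; exact Finset.sum_eq_zero fun q _ => hccol0 i q hi
  have hBrcrow0 : ∀ i, l ≤ i → ∀ j, rowCount B i j = 0 := fun i hi j => by
    simp [rowCount, hBrow0 i hi]
  have hBmono : ∀ i j₁ j₂, j₁ ≤ j₂ → B i j₁ ≤ B i j₂ := fun i j₁ j₂ h => by
    rw [hBval, hBval]
    exact Finset.sum_le_sum_of_subset (Finset.range_subset_range.2 (by omega))
  have hBl : ∀ i, B i l = nu i := by
    intro i
    rcases lt_or_ge i l with hi | hi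
    · rw [hBval, min_self, ← hAw i hi, wt_eq_sum (N := l) fun q hq => hcrow0 q hq i]
    · rw [hBrow0 i hi, hnul i hi]
  have hBS : IsSSYT l B := by
    refine ⟨fun i j _ => hBmono i j (j + 1) (Nat.le_succ j), ?_,
      fun i => by rw [hBval, hBval]; simp,
      ⟨l, fun i hi => hBrow0 i hi l⟩,
      fun i j hj => by rw [hBval, hBval, min_self, min_eq_right hj]⟩
    intro i j hj
    rw [hBval, hBval, min_eq_left (by omega), min_eq_left (by omega)]
    rcases lt_or_ge (i + 1) l with hi | hi
    · exact hAL i j hi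
    · calc (∑ q ∈ Finset.range (j + 1), rowCount A q (i + 1)) = 0 :=
            Finset.sum_eq_zero fun q _ => hccol0 (i + 1) q hi
        _ ≤ _ := Nat.zero_le _
  have hBw : ∀ j, j < l → wt B j = lam j - mu j := by
    intro j hj
    have hsupp : ∀ i, l ≤ i → rowCount B i j = 0 := fun i hi => hBrcrow0 i hi j
    rw [wt_eq_sum (N := l) hsupp]
    have h3 : ∑ i ∈ Finset.range l, rowCount B i j = ∑ i ∈ Finset.range l, rowCount A j i :=
      Finset.sum_congr rfl fun i _ => by rw [hBrc i j, if_pos hj]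
    rw [h3]
    have h2 := sum_rowCount_eq A j (ssyt_mono hAS j) l
    rw [hA0 j, hAl j] at h2
    omega
  have hBY : MemYT l nu (fun _ => 0) (fun j => lam j - mu j) B :=
    ⟨hBS, fun i => by rw [hBval]; simp, hBl, hBw⟩
  refine ⟨hBY, ?_⟩
  set G := composeGT l (nu 0) (canGT mu) B with hGdef
  have hGtop : ∀ i j, i < l → G i j = nu 0 + (if i < j then mu i else 0) := fun i j hi => by
    simp [hGdef, composeGT, canGT, hi]
  have hGbot : ∀ i j, l ≤ i → G i j = B (i - l) j := fun i j hi => by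
    simp [hGdef, composeGT, if_neg (by omega : ¬ i < l)]
  have hGrow : ∀ i j, j < l → G i j ≤ G i (j + 1) := by
    intro i j hj
    rcases lt_or_ge i l with hi | hi
    · rw [hGtop i j hi, hGtop i (j + 1) hi]
      split_ifs <;> omega
    · rw [hGbot i j hi, hGbot i (j + 1) hi]
      exact hBS.1 (i - l) j hj
  have hGcol : ∀ i j, j < l → G (i + 1) (j + 1) ≤ G i j := by
    intro i j hj
    rcases lt_or_ge (i + 1) l with hi1 | hi1
    · rw [hGtop (i + 1) (j + 1) hi1, hGtop i j (by omega)]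
      have hmui := hmu.1 i
      split_ifs <;> omega
    · rcases lt_or_ge i l with hi | hi
      · rw [hGbot (i + 1) (j + 1) hi1, hGtop i j hi]
        rw [show i + 1 - l = 0 by omega]
        calc B 0 (j + 1) ≤ B 0 l := hBmono 0 (j + 1) l (by omega)
          _ = nu 0 := hBl 0
          _ ≤ nu 0 + _ := Nat.le_add_right _ _
      · rw [hGbot (i + 1) (j + 1) (by omega), hGbot i j hi,
          show i + 1 - l = (i - l) + 1 by omega]
        exact hBS.2.1 (i - l) j hj
  have hGcol0 : ∀ i, G (i + 1) 0 ≤ G i 0 := by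
    intro i
    rcases lt_or_ge (i + 1) l with h1 | h1
    · rw [hGtop (i + 1) 0 h1, hGtop i 0 (by omega)]
      split_ifs <;> omega
    · rcases lt_or_ge i l with h2 | h2
      · rw [hGbot (i + 1) 0 h1, hGtop i 0 h2, hBval]
        simp
      · rw [hGbot (i + 1) 0 h1, hGbot i 0 h2, hBval, hBval]
        simp
  have hGconst : ∀ i j, l ≤ j → G i j = G i l := by
    intro i j hj
    rcases lt_or_ge i l with hi | hi
    · rw [hGtop i j hi, hGtop i l hi, if_pos (by omega : i < j), if_pos hi]
    · rw [hGbot i j hi, hGbot i l hi]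
      exact hBS.2.2.2.2 (i - l) j hj
  have hGin : ∀ i, G i 0 = (if i < l then nu 0 else 0) := by
    intro i
    rcases lt_or_ge i l with hi | hi
    · rw [hGtop i 0 hi, if_pos hi, if_neg (by omega : ¬ i < 0)]
      omega
    · rw [hGbot i 0 hi, if_neg (by omega : ¬ i < l), hBval]
      simp
  have hGout : ∀ i, G i l = (if i < l then nu 0 + mu i else nu (i - l)) := by
    intro i
    rcases lt_or_ge i l with hi | hi
    · rw [hGtop i l hi, if_pos hi, if_pos hi]
    · rw [hGbot i l hi, hBl (i - l), if_neg (by omega : ¬ i < l)]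
  have hGw : ∀ j, j < l → wt G j = lam j := by
    intro j hj
    have hsupp : ∀ i, l + l ≤ i → rowCount G i j = 0 := by
      intro i hi
      simp [rowCount, hGbot i (j + 1) (by omega), hGbot i j (by omega),
        hBrow0 (i - l) (by omega)]
    rw [wt_eq_sum (N := l + l) hsupp, Finset.sum_range_add]
    have h1 : ∑ i ∈ Finset.range l, rowCount G i j = mu j := by
      rw [hGdef, compose_colsum_top l (nu 0) mu B (le_refl l), if_pos hj]
    have h2 : ∑ i ∈ Finset.range l, rowCount G (l + i) j = lam j - mu j := by
      have e1 : ∀ i, rowCount G (l + i) j = rowCount B i j := fun i => by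
        simp [rowCount, hGbot (l + i) (j + 1) (by omega), hGbot (l + i) j (by omega),
          Nat.add_sub_cancel_left]
      rw [Finset.sum_congr rfl fun i _ => e1 i,
        ← wt_eq_sum (N := l) fun i hi => hBrcrow0 i hi j, hBw j hj]
    rw [h1, h2]
    have := hsub j
    omega
  have hGlat : IsLattice l G := by
    intro j i hj
    rcases lt_or_ge i l with hi | hi
    · rw [hGdef, compose_colsum_top l (nu 0) mu B (by omega : i + 1 ≤ l),
        compose_colsum_top l (nu 0) mu B (by omega : i ≤ l)]
      have := hmu.1 j
      split_ifs <;> omega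
    · have c1 : ∀ v, v < l → ∀ p,
          nu 0 + 0 = nu 0 + 0 → mu v + ∑ q ∈ Finset.range p, rowCount B q v = A v p := by
        intro v hv p _
        have e : ∀ q, rowCount B q v = rowCount A v q := fun q => by
          rw [hBrc q v, if_pos hv]
        rw [Finset.sum_congr rfl fun q _ => e q, ← hA0 v]
        exact sum_rowCount_eq A v (ssyt_mono hAS v) p
      have b1 := compose_colsum_bot l (nu 0) mu B (show j + 1 < l from hj) (i + 1 - l)
      have b2 := compose_colsum_bot l (nu 0) mu B (show j < l by omega) (i - l)
      rw [show l + (i + 1 - l) = i + 1 by omega] at b1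
      rw [show l + (i - l) = i by omega] at b2
      rw [hGdef, b1, b2, c1 (j + 1) hj (i + 1 - l) rfl, c1 j (by omega) (i - l) rfl,
        show i + 1 - l = (i - l) + 1 by omega]
      rcases lt_or_ge (i - l) l with hpl | hpl
      · exact hAS.2.1 j (i - l) hpl
      · rw [hAS.2.2.2.2 (j + 1) ((i - l) + 1) (by omega), hAS.2.2.2.2 j (i - l) hpl,
          hAl, hAl]
        exact hlam.1 j
  exact ⟨⟨⟨hGrow, hGcol, hGcol0,
    ⟨l + l, fun i hi => by rw [hGout i, if_neg (by omega : ¬ i < l)]; exact hnul _ (by omega)⟩,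
    hGconst⟩, hGin, hGout, hGw⟩, hGlat⟩

lemma mapsTo_inv {l : ℕ} {lam mu nu : ℕ → ℕ}
    (hmu : IsPartition mu) (hnu : IsPartition nu)
    (hsub : subShape mu lam) (hl : ∀ i, lam i = 0 ↔ l ≤ i)
    {B : GT} (hB : MemCF l nu mu lam B) : MemLR l lam mu nu (invTau l mu B) := by
  obtain ⟨hBY, hGY, hGlat⟩ := hB
  obtain ⟨hBS, hB0, hBl, hBw⟩ := hBY
  have hnul : ∀ i, l ≤ i → nu i = 0 := nu_tail_of_B hnu ⟨hBS, hB0, hBl, hBw⟩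
  have hmuz : ∀ i, l ≤ i → mu i = 0 := fun i hi =>
    Nat.le_zero.1 ((hl i).2 hi ▸ hsub i)
  have hBrow0 : ∀ i, l ≤ i → ∀ j, B i j = 0 := fun i hi j =>
    memYT_zero_row ⟨hBS, hB0, hBl, hBw⟩ (hnul i hi) j
  have hBrc0row : ∀ i, l ≤ i → ∀ j, rowCount B i j = 0 := fun i hi j => by
    simp [rowCount, hBrow0 i hi]
  have hBrc0col : ∀ i q, l ≤ q → rowCount B i q = 0 := fun i q hq =>
    rowCount_zero_of_const hBS hq i
  set A := invTau l mu B with hAdef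
  have hAval : ∀ i j, A i j = mu i + ∑ q ∈ Finset.range (min j l), rowCount B q i :=
    fun i j => rfl
  have hArc : ∀ q i, rowCount A q i = if i < l then rowCount B i q else 0 :=
    rowCount_invTau l mu B
  have hA0 : ∀ i, A i 0 = mu i := by
    intro i; rw [hAval]; simp
  have hAl : ∀ i, A i l = lam i := by
    intro i
    rcases lt_or_ge i l with hi | hi
    · rw [hAval, min_self]
      have h1 : ∑ q ∈ Finset.range l, rowCount B q i = wt B i :=
        (wt_eq_sum (N := l) fun q hq => hBrc0row q hq i).symm
      have hw : wt B i = lam i - mu i := hBw i hi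
      rw [h1, hw]
      have := hsub i
      omega
    · rw [hAval, min_self,
        Finset.sum_eq_zero fun q (_ : q ∈ Finset.range l) => hBrc0col q i hi]
      have h1 := hmuz i hi
      have h2 := (hl i).2 hi
      omega
  have hAmono : ∀ i j₁ j₂, j₁ ≤ j₂ → A i j₁ ≤ A i j₂ := fun i j₁ j₂ h => by
    rw [hAval, hAval]
    exact Nat.add_le_add_left (Finset.sum_le_sum_of_subset (Finset.range_subset_range.2 (by omega))) _
  have hAcol : ∀ i j, j < l → A (i + 1) (j + 1) ≤ A i j := by
    intro i j hj
    rcases lt_or_ge (i + 1) l with hi1 | hi1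
    · have hlat := hGlat i (l + j) hi1
      rw [show l + j + 1 = l + (j + 1) by omega] at hlat
      rw [compose_colsum_bot l (nu 0) mu B (show i + 1 < l from hi1) (j + 1),
        compose_colsum_bot l (nu 0) mu B (show i < l by omega) j] at hlat
      rw [hAval, hAval, min_eq_left (by omega), min_eq_left (by omega)]
      exact hlat
    · rw [hAval, hAval,
        Finset.sum_eq_zero fun q (_ : q ∈ Finset.range (min (j + 1) l)) => hBrc0col q (i + 1) hi1]
      have h1 := hmu.1 i
      have h2 := Nat.zero_le (∑ q ∈ Finset.range (min j l), rowCount B q i)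
      omega
  have hAw : ∀ j, j < l → wt A j = nu j := by
    intro j hj
    have hsupp : ∀ i, l ≤ i → rowCount A i j = 0 := fun i hi => by
      rw [hArc i j, if_pos hj]
      exact hBrc0col j i hi
    rw [wt_eq_sum (N := l) hsupp]
    have h3 : ∑ i ∈ Finset.range l, rowCount A i j = ∑ i ∈ Finset.range l, rowCount B j i :=
      Finset.sum_congr rfl fun i _ => by rw [hArc i j, if_pos hj]
    rw [h3]
    have h2 := sum_rowCount_eq B j (ssyt_mono hBS j) l
    have hb0 : B j 0 = 0 := hB0 j
    have hbl : B j l = nu j := hBl j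
    omega
  have hAlat : IsLattice l A := by
    intro j i hj
    have e1 : ∀ v, v < l → ∀ k, ∑ q ∈ Finset.range k, rowCount A q v = B v k := by
      intro v hv k
      have h3 : ∑ q ∈ Finset.range k, rowCount A q v = ∑ q ∈ Finset.range k, rowCount B v q :=
        Finset.sum_congr rfl fun q _ => by rw [hArc q v, if_pos hv]
      rw [h3]
      have h := sum_rowCount_eq B v (ssyt_mono hBS v) k
      have hb0 : B v 0 = 0 := hB0 v
      omega
    rw [e1 (j + 1) hj (i + 1), e1 j (by omega) i]
    rcases lt_or_ge i l with hi | hi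
    · exact hBS.2.1 j i hi
    · rw [hBS.2.2.2.2 (j + 1) (i + 1) (by omega), hBS.2.2.2.2 j i hi, hBl, hBl]
      exact hnu.1 j
  exact ⟨⟨⟨fun i j _ => hAmono i j (j + 1) (Nat.le_succ j), hAcol,
    fun i => by rw [hA0, hA0]; exact hmu.1 i,
    ⟨l, fun i hi => by rw [hAl i]; exact (hl i).2 hi⟩,
    fun i j hj => by rw [hAval, hAval, min_self, min_eq_right hj]⟩,
    hA0, hAl, hAw⟩, hAlat⟩

lemma tau_left_inv {l : ℕ} {lam mu nu : ℕ → ℕ}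
    (hsub : subShape mu lam) (hl : ∀ i, lam i = 0 ↔ l ≤ i)
    {A : GT} (hA : MemLR l lam mu nu A) : invTau l mu (tauMap l A) = A := by
  obtain ⟨⟨hAS, hA0, hAl, hAw⟩, -⟩ := hA
  have hmuz : ∀ i, l ≤ i → mu i = 0 := fun i hi =>
    Nat.le_zero.1 ((hl i).2 hi ▸ hsub i)
  have hArow0 : ∀ i, l ≤ i → ∀ j, A i j = 0 := fun i hi j =>
    memYT_zero_row ⟨hAS, hA0, hAl, hAw⟩ ((hl i).2 hi) j
  funext i j
  show mu i + ∑ q ∈ Finset.range (min j l), rowCount (tauMap l A) q i = A i j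
  rcases lt_or_ge i l with hi | hi
  · rw [Finset.sum_congr rfl fun q (_ : q ∈ Finset.range (min j l)) =>
      (rowCount_tauMap l A q i).trans (if_pos hi)]
    rw [← hA0 i, ← ssyt_eval hAS i j]
  · rw [Finset.sum_eq_zero fun q (_ : q ∈ Finset.range (min j l)) =>
      (rowCount_tauMap l A q i).trans (if_neg (by omega))]
    rw [hArow0 i hi j, hmuz i hi]
    omega

lemma tau_right_inv {l : ℕ} {lam mu nu : ℕ → ℕ}
    (hnu : IsPartition nu)
    {B : GT} (hB : MemCF l nu mu lam B) : tauMap l (invTau l mu B) = B := by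
  obtain ⟨⟨hBS, hB0, hBl, hBw⟩, -, -⟩ := hB
  have hnul : ∀ i, l ≤ i → nu i = 0 := nu_tail_of_B hnu ⟨hBS, hB0, hBl, hBw⟩
  have hBrow0 : ∀ i, l ≤ i → ∀ j, B i j = 0 := fun i hi j =>
    memYT_zero_row ⟨hBS, hB0, hBl, hBw⟩ (hnul i hi) j
  funext i j
  show (∑ q ∈ Finset.range (min j l), rowCount (invTau l mu B) q i) = B i j
  rcases lt_or_ge i l with hi | hi
  · have h3 : (∑ q ∈ Finset.range (min j l), rowCount (invTau l mu B) q i)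
        = ∑ q ∈ Finset.range (min j l), rowCount B i q :=
      Finset.sum_congr rfl fun q _ => (rowCount_invTau l mu B q i).trans (if_pos hi)
    rw [h3]
    have h := ssyt_eval hBS i j
    have hb0 : B i 0 = 0 := hB0 i
    omega
  · rw [Finset.sum_eq_zero fun q (_ : q ∈ Finset.range (min j l)) =>
      (rowCount_invTau l mu B q i).trans (if_neg (by omega))]
    rw [hBrow0 i hi j]

/-- Proposition 11.
Let `μ ⊆ λ` and `ν ⊢ |λ/μ|`, with `l = ℓ(λ)`.  The map `τ`, sending an LR tableau
`A ∈ LR(λ/μ, ν)` with recording matrix `C = (c_{i,j})` to the tableau with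
recording matrix `e_{i,j} = c_{j,i}` (`1 ≤ i ≤ j ≤ l`), is a well-defined
bijection `τ : LR(λ/μ, ν) → CF(ν, μ, λ)`. -/
theorem tau_bijection
    (l : ℕ) (lam mu nu : ℕ → ℕ)
    (hlam : IsPartition lam) (hmu : IsPartition mu) (hnu : IsPartition nu)
    (hsub : subShape mu lam)
    (hsize : psize mu + psize nu = psize lam)
    (hl : ∀ i, lam i = 0 ↔ l ≤ i) :
    Set.BijOn (tauMap l) {A | MemLR l lam mu nu A}
      {B | MemCF l nu mu lam B} := by
  have hinv : Set.InvOn (invTau l mu) (tauMap l)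
      {A | MemLR l lam mu nu A} {B | MemCF l nu mu lam B} :=
    ⟨fun A hA => tau_left_inv hsub hl hA, fun B hB => tau_right_inv hnu hB⟩
  exact hinv.bijOn
    (fun A hA => mapsTo_tau hlam hmu hsub hl (nu_tail_of_A hnu hsub hsize hl hA) hA)
    (fun B hB => mapsTo_inv hmu hnu hsub hl hB)

end YoungTableauBijections
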